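/- Let n ∈ ℝ³ be a unit vector and B = -iβ(α·n). If v, w ∈ ℂ⁴ satisfy Bv = v and Bw = w, then ⟨(-i α·n) v, w⟩_{ℂ⁴} = 0. -/

import Mathlib

open Matrix Complex

/-- The three Pauli matrices. -/
noncomputable def pauli : Fin 3 → Matrix (Fin 2) (Fin 2) ℂ :=
  ![!![0, 1; 1, 0], !![0, -I; I, 0], !![1, 0; 0, -1]]

/-- The Dirac matrices `αⱼ = [[0, σⱼ], [σⱼ, 0]]`. -/
noncomputable def diracAlpha (j : Fin 3) :
    Matrix (Fin 2 ⊕ Fin 2) (Fin 2 ⊕ Fin 2) ℂ :=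
  Matrix.fromBlocks 0 (pauli j) (pauli j) 0

/-- The Dirac matrix `β = [[I₂, 0], [0, -I₂]]`. -/
noncomputable def diracBeta : Matrix (Fin 2 ⊕ Fin 2) (Fin 2 ⊕ Fin 2) ℂ :=
  Matrix.fromBlocks 1 0 0 (-1)

/-- `α · x = x₁α₁ + x₂α₂ + x₃α₃`. -/
noncomputable def alphaDot (x : EuclideanSpace ℝ (Fin 3)) :
    Matrix (Fin 2 ⊕ Fin 2) (Fin 2 ⊕ Fin 2) ℂ :=
  ∑ j : Fin 3, (x j : ℂ) • diracAlpha j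


/-- The MIT bag boundary matrix `B = -iβ(α·n)`. -/
noncomputable def mitB (n : EuclideanSpace ℝ (Fin 3)) :
    Matrix (Fin 2 ⊕ Fin 2) (Fin 2 ⊕ Fin 2) ℂ :=
  (-I) • (diracBeta * alphaDot n)

/-!
`B` is Hermitian and anticommutes with `β`, and `β B = -i α·n` because `β² = 1`.
For fixed vectors `v`, `w` of `B` this gives
`⟨-i(α·n) v, w⟩ = ⟨β v, w⟩ = ⟨β v, B w⟩ = ⟨B β v, w⟩ = -⟨β v, w⟩`.
-/

theorem LinearMap.IsSymmetric.inner_apply_eq_zero_of_anticommute {𝕜 E : Type*} [RCLike 𝕜]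
    [NormedAddCommGroup E] [InnerProductSpace 𝕜 E] {B T : E →ₗ[𝕜] E} (hB : B.IsSymmetric)
    (hBT : ∀ x, B (T x) = -T (B x)) {v w : E} (hv : B v = v) (hw : B w = w) :
    inner 𝕜 (T v) w = 0 := by
  have h : inner 𝕜 (T v) w = -inner 𝕜 (T v) w :=
    calc inner 𝕜 (T v) w = inner 𝕜 (T v) (B w) := by rw [hw]
      _ = inner 𝕜 (B (T v)) w := (hB _ _).symm
      _ = -inner 𝕜 (T v) w := by rw [hBT, hv, inner_neg_left]
  exact self_eq_neg.mp h

theorem diracBeta_mul_self : diracBeta * diracBeta = 1 := by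
  simp [diracBeta, fromBlocks_multiply, ← fromBlocks_one]

theorem diracAlpha_mul_diracBeta (j : Fin 3) :
    diracAlpha j * diracBeta = -(diracBeta * diracAlpha j) := by
  simp [diracAlpha, diracBeta, fromBlocks_multiply, fromBlocks_neg]

theorem alphaDot_mul_diracBeta (x : EuclideanSpace ℝ (Fin 3)) :
    alphaDot x * diracBeta = -(diracBeta * alphaDot x) := by
  simp only [alphaDot, Finset.sum_mul, Finset.mul_sum, Matrix.smul_mul, Matrix.mul_smul,
    diracAlpha_mul_diracBeta, smul_neg, Finset.sum_neg_distrib]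

theorem pauli_isHermitian (j : Fin 3) : (pauli j).IsHermitian := by
  fin_cases j <;> ext i k <;> fin_cases i <;> fin_cases k <;>
    simp [pauli, conjTranspose_apply]

theorem diracBeta_isHermitian : diracBeta.IsHermitian := by
  simp [IsHermitian, diracBeta, fromBlocks_conjTranspose]

theorem alphaDot_isHermitian (x : EuclideanSpace ℝ (Fin 3)) : (alphaDot x).IsHermitian := by
  simp [IsHermitian, alphaDot, conjTranspose_sum, conjTranspose_smul, diracAlpha,
    fromBlocks_conjTranspose, (pauli_isHermitian _).eq]

theorem mitB_isHermitian (n : EuclideanSpace ℝ (Fin 3)) : (mitB n).IsHermitian := by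
  simp [IsHermitian, mitB, conjTranspose_smul, conjTranspose_mul, diracBeta_isHermitian.eq,
    (alphaDot_isHermitian n).eq, alphaDot_mul_diracBeta]

theorem diracBeta_mul_mitB (n : EuclideanSpace ℝ (Fin 3)) :
    diracBeta * mitB n = (-I) • alphaDot n := by
  rw [mitB, Matrix.mul_smul, ← Matrix.mul_assoc, diracBeta_mul_self, Matrix.one_mul]

theorem mitB_mul_diracBeta (n : EuclideanSpace ℝ (Fin 3)) :
    mitB n * diracBeta = -(diracBeta * mitB n) := by
  rw [mitB, Matrix.smul_mul, Matrix.mul_assoc, alphaDot_mul_diracBeta, Matrix.mul_smul,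
    Matrix.mul_neg, smul_neg]

theorem mitB_boundary_vanishing_general (n : EuclideanSpace ℝ (Fin 3))
    (v w : EuclideanSpace ℂ (Fin 2 ⊕ Fin 2))
    (hv : (mitB n).mulVec ((WithLp.equiv 2 ((Fin 2 ⊕ Fin 2) → ℂ)) v) =
      (WithLp.equiv 2 ((Fin 2 ⊕ Fin 2) → ℂ)) v)
    (hw : (mitB n).mulVec ((WithLp.equiv 2 ((Fin 2 ⊕ Fin 2) → ℂ)) w) =
      (WithLp.equiv 2 ((Fin 2 ⊕ Fin 2) → ℂ)) w) :
    inner ℂ ((WithLp.equiv 2 ((Fin 2 ⊕ Fin 2) → ℂ)).symm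
        (((-I) • alphaDot n).mulVec ((WithLp.equiv 2 ((Fin 2 ⊕ Fin 2) → ℂ)) v))) w = (0 : ℂ) := by
  have hB : (toEuclideanLin (mitB n)).IsSymmetric :=
    isSymmetric_toEuclideanLin_iff.mpr (mitB_isHermitian n)
  have hBβ : ∀ x, toEuclideanLin (mitB n) (toEuclideanLin diracBeta x) =
      -toEuclideanLin diracBeta (toEuclideanLin (mitB n) x) := fun x => by
    simp only [toLpLin_apply, mulVec_mulVec, mitB_mul_diracBeta, neg_mulVec, WithLp.toLp_neg]
  rw [← diracBeta_mul_mitB, ← mulVec_mulVec, hv]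
  exact hB.inner_apply_eq_zero_of_anticommute hBβ (congrArg (WithLp.toLp 2) hv)
    (congrArg (WithLp.toLp 2) hw)

/-- If `Bv = v` and `Bw = w` then `⟨(-i α·n) v, w⟩ = 0`. -/
theorem mitB_boundary_vanishing (n : EuclideanSpace ℝ (Fin 3)) (hn : ‖n‖ = 1)
    (v w : EuclideanSpace ℂ (Fin 2 ⊕ Fin 2))
    (hv : (mitB n).mulVec ((WithLp.equiv 2 ((Fin 2 ⊕ Fin 2) → ℂ)) v) =
      (WithLp.equiv 2 ((Fin 2 ⊕ Fin 2) → ℂ)) v)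
    (hw : (mitB n).mulVec ((WithLp.equiv 2 ((Fin 2 ⊕ Fin 2) → ℂ)) w) =
      (WithLp.equiv 2 ((Fin 2 ⊕ Fin 2) → ℂ)) w) :
    inner ℂ ((WithLp.equiv 2 ((Fin 2 ⊕ Fin 2) → ℂ)).symm
        (((-I) • alphaDot n).mulVec ((WithLp.equiv 2 ((Fin 2 ⊕ Fin 2) → ℂ)) v))) w = (0 : ℂ) :=
  mitB_boundary_vanishing_general n v w hv hw
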